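/- Suppose Assumptions 1–3 hold for the resource allocation game: each f_ij is convex and continuously differentiable with ∇f_ij Lipschitz of constant l_ij; the pseudo-gradient P is strongly monotone with constant μ > 0; each L_i is the Laplacian of a connected undirected graph on coalition i. Let M ∈ ℝ^{n_sum²×n_sum²} be such that I − M is nonsingular, and for each i let C_i ∈ ℝ^{n_i×n_i} be row-stochastic with positive diagonal entries and, off the diagonal, positive entries exactly on the edges of the connected subgraph G_i. Let L̆_i = diag{(L_i)_1,…,(L_i)_{n_i}} ∈ ℝ^{n_i×n_i²} where (L_i)_j is the j-th row of L_i, and Q̄_i(ξ_i) = (1/n_i) Σ_{j=1}^{n_i} (∂f_ij/∂x_i)(ξ_ij) where ξ_i stacks ξ_ij ∈ ℝ^{n_sum}. Suppose x(∞) ∈ Ω, ψ_i(∞) ∈ ℝ^{n_i²} (i = 1,…,N), and ξ(∞) ∈ ℝ^{n_sum²} (stacking ξ_ij(∞) over all agents) satisfy the steady-state equations: L̆_i ψ_i(∞) = 0 for all i; ψ_i(∞) = (C_i ⊗ I_{n_i}) ψ_i(∞) for all i; (I − M)(ξ(∞) − 1_{n_sum} ⊗ x(∞)) = 0; and (1/n_i)(1_{n_i}ᵀ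 ⊗ I_{n_i}) ψ_i(∞) = Q̄_i(ξ_i(∞)) for all i. Then ξ(∞) = 1_{n_sum} ⊗ x(∞), ψ_i(∞) = 1_{n_i} ⊗ ((1/n_i)(∂f_i/∂x_i)(x(∞))) for all i, L_i (∂f_i/∂x_i)(x(∞)) = 0 for all i, and consequently x(∞) is the (unique) Nash equilibrium x* of the game. -/

import Mathlib

noncomputable section
open Matrix Kronecker
open scoped RealInnerProductSpace

/-- The collective decision space: coalition `i` has block `ℝ^{n i}`. -/
abbrev Vec (N : ℕ) (n : Fin N → ℕ) := PiLp 2 (fun i : Fin N => EuclideanSpace ℝ (Fin (n i)))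

/-- Agents, indexed by coalition and position within the coalition. -/
abbrev Agent (N : ℕ) (n : Fin N → ℕ) := Σ i : Fin N, Fin (n i)

/-- The stacked estimation vector `ξ ∈ ℝ^{n_sum²}`. -/
abbrev Est (N : ℕ) (n : Fin N → ℕ) := EuclideanSpace ℝ (Agent N n × Agent N n)

variable {N : ℕ} {n : Fin N → ℕ}

/-- Agent `a`'s estimate of the collective decision, as an element of the decision space. -/
def toVec (ξ : Est N n) (a : Agent N n) : Vec N n :=
  WithLp.toLp 2 (fun p => WithLp.toLp 2 (fun q => ξ (a, ⟨p, q⟩)))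

/-- `1_{n_sum} ⊗ x ∈ ℝ^{n_sum²}`. -/
def onesKronFull (x : Vec N n) : Est N n :=
  WithLp.toLp 2 (fun ac : Agent N n × Agent N n => x ac.2.1 ac.2.2)

/-- Coalition-level objective `f_i = ∑_j f_ij`. -/
def coalObj (f : ∀ i : Fin N, Fin (n i) → Vec N n → ℝ) (i : Fin N) (x : Vec N n) : ℝ :=
  ∑ j, f i j x

/-- The gradient of `f_i` with respect to its own block `x_i`, i.e. `∂f_i/∂x_i`. -/
def blockGrad (f : ∀ i : Fin N, Fin (n i) → Vec N n → ℝ) (i : Fin N) (x : Vec N n) :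
    EuclideanSpace ℝ (Fin (n i)) :=
  WithLp.toLp 2 (fun j => gradient (coalObj f i) x i j)

/-- The pseudo-gradient `P(x) = (∂f_1/∂x_1(x), …, ∂f_N/∂x_N(x))`. -/
def pseudoGrad (f : ∀ i : Fin N, Fin (n i) → Vec N n → ℝ) (x : Vec N n) : Vec N n :=
  WithLp.toLp 2 (fun i => blockGrad f i x)

/-- Nash equilibrium of the resource allocation game. -/
def IsNE (f : ∀ i : Fin N, Fin (n i) → Vec N n → ℝ) (R : Fin N → ℝ) (x : Vec N n) : Prop :=
  (∀ i, ∑ j, x i j = R i) ∧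
  ∀ (i : Fin N) (y : EuclideanSpace ℝ (Fin (n i))), (∑ j, y j = R i) →
    coalObj f i x ≤ coalObj f i (WithLp.toLp 2 (Function.update x.ofLp i y))

/-- `L̆_i = diag{(L_i)_1,…,(L_i)_{n_i}} ∈ ℝ^{n_i × n_i²}`. -/
def Lbreve (L : ∀ i : Fin N, Matrix (Fin (n i)) (Fin (n i)) ℝ) (i : Fin N) :
    Matrix (Fin (n i)) (Fin (n i) × Fin (n i)) ℝ :=
  Matrix.of fun j lm => if j = lm.1 then L i j lm.2 else 0

/-!
Injectivity of `I - M` forces `ξ = 1 ⊗ x`. For each `m`, the column `j ↦ ψ_i(j, m)` is a fixed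
vector of the stochastic matrix `C_i`, whose support graph `G_i` is connected, so by the maximum
principle it is constant; the tracking equation then identifies the constant as
`(1/n_i) ∂f_i/∂x_i(x)`, and `L̆_i ψ_i = 0` becomes `L_i ∂f_i/∂x_i(x) = 0`. Since `G_i` is
connected, `∂f_i/∂x_i(x)` is then a constant vector, i.e. orthogonal to the tangent space
`{d | 1ᵀd = 0}` of `Ω_i`: this is the KKT condition of the game. For convex costs the KKT condition
at a feasible point is equivalent to being a Nash equilibrium, and strong monotonicity of `P`
makes the KKT point unique, because two of them `x, y` satisfy `⟪y - x, P y - P x⟫ = 0`.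
-/

lemma ConvexOn.fun_sum {E ι : Type*} [AddCommGroup E] [Module ℝ E] {s : Set E}
    (hs : Convex ℝ s) (t : Finset ι) {g : ι → E → ℝ} (hg : ∀ j ∈ t, ConvexOn ℝ s (g j)) :
    ConvexOn ℝ s (fun y => ∑ j ∈ t, g j y) := by
  simpa only [← Finset.sum_apply] using
    Finset.sum_induction g (ConvexOn ℝ s) (fun _ _ => ConvexOn.add) (convexOn_const 0 hs) hg

section FirstOrder

variable {F : Type*} [NormedAddCommGroup F] [InnerProductSpace ℝ F] [CompleteSpace F]
  {f : F → ℝ} {x : F}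

lemma gradient_fun_sum {ι : Type*} (s : Finset ι) {g : ι → F → ℝ}
    (hg : ∀ j ∈ s, DifferentiableAt ℝ (g j) x) :
    gradient (fun y => ∑ j ∈ s, g j y) x = ∑ j ∈ s, gradient (g j) x := by
  simp only [gradient, fderiv_fun_sum hg, map_sum]

lemma hasDerivAt_comp_add_smul (hf : DifferentiableAt ℝ f x) (u : F) :
    HasDerivAt (fun t : ℝ => f (x + t • u)) ⟪gradient f x, u⟫ 0 := by
  have hline : HasDerivAt (fun t : ℝ => x + t • u) u 0 := by
    simpa using ((hasDerivAt_id (0 : ℝ)).smul_const u).const_add x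
  rw [inner_gradient_left]
  exact hf.hasFDerivAt.comp_hasDerivAt_of_eq 0 hline (by simp)

lemma ConvexOn.add_inner_gradient_le (hc : ConvexOn ℝ Set.univ f) (hf : DifferentiableAt ℝ f x)
    (y : F) : f x + ⟪gradient f x, y - x⟫ ≤ f y := by
  have hline : ConvexOn ℝ Set.univ (fun t : ℝ => f (x + t • (y - x))) := by
    simpa [Function.comp_def, AffineMap.lineMap_apply_module', add_comm]
      using hc.comp_affineMap (AffineMap.lineMap x y)
  have h := hline.le_slope_of_hasDerivAt (Set.mem_univ 0) (Set.mem_univ 1) zero_lt_one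
    (hasDerivAt_comp_add_smul hf (y - x))
  simp only [slope_def_field, zero_smul, add_zero, one_smul, add_sub_cancel, sub_zero,
    div_one] at h
  linarith

lemma inner_gradient_eq_zero_of_forall_le (hf : DifferentiableAt ℝ f x) {u : F}
    (hmin : ∀ t : ℝ, f x ≤ f (x + t • u)) : ⟪gradient f x, u⟫ = 0 :=
  IsLocalMin.hasDerivAt_eq_zero (.of_forall fun t => by simpa using hmin t)
    (hasDerivAt_comp_add_smul hf u)

end FirstOrder

lemma inner_eq_zero_of_forall_eq_of_sum_eq_zero {ι : Type*} [Fintype ι]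
    {v d : EuclideanSpace ℝ ι} (hv : ∀ j k, v j = v k) (hd : ∑ j, d j = 0) : ⟪v, d⟫ = 0 := by
  rcases isEmpty_or_nonempty ι with _ | ⟨⟨k⟩⟩
  · simp [PiLp.inner_apply, Finset.univ_eq_empty]
  · simp [PiLp.inner_apply, hv _ k, ← Finset.sum_mul, hd]

lemma PiLp.inner_single_right {ι : Type*} [Fintype ι] [DecidableEq ι]
    {β : ι → Type*} [∀ i, NormedAddCommGroup (β i)] [∀ i, InnerProductSpace ℝ (β i)]
    (a : PiLp 2 β) (i : ι) (d : β i) : ⟪a, PiLp.single 2 i d⟫ = ⟪a i, d⟫ := by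
  rw [PiLp.inner_apply, Finset.sum_eq_single i]
  · simp
  · intro j _ hj; simp [hj]
  · simp

lemma PiLp.toLp_update_eq_add_single {ι : Type*} [DecidableEq ι] {p : ENNReal}
    {β : ι → Type*} [∀ i, AddCommGroup (β i)] (x : PiLp p β) (i : ι) (y : β i) :
    WithLp.toLp p (Function.update x.ofLp i y) = x + PiLp.single p i (y - x i) := by
  rw [PiLp.single, ← WithLp.toLp_ofLp (p := p) x, ← WithLp.toLp_add]
  congr 1
  ext j
  rcases eq_or_ne j i with rfl | hj
  · simp
  · simp [hj]

lemma Matrix.kronecker_one_mulVec_apply {R m p : Type*} [CommSemiring R] [Fintype m]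
    [Fintype p] [DecidableEq p] (C : Matrix m m R) (ψ : m × p → R) (l : m) (q : p) :
    ((C ⊗ₖ (1 : Matrix p p R)) *ᵥ ψ) (l, q) = ∑ j, C l j * ψ (j, q) := by
  simp [Matrix.mulVec, dotProduct, Fintype.sum_prod_type, Matrix.one_apply]

lemma SimpleGraph.Connected.apply_eq_of_mulVec_eq_self {V : Type*} [Fintype V]
    {G : SimpleGraph V} (hG : G.Connected) {C : Matrix V V ℝ} (hnonneg : ∀ j k, 0 ≤ C j k)
    (hrow : ∀ j, ∑ k, C j k = 1) (hadj : ∀ j k, G.Adj j k → 0 < C j k) {v : V → ℝ}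
    (hv : C *ᵥ v = v) (j k : V) : v j = v k := by
  have := hG.nonempty
  obtain ⟨a, -, ha⟩ := Finset.exists_max_image Finset.univ v Finset.univ_nonempty
  have hle : ∀ b, v b ≤ v a := fun b => ha b (Finset.mem_univ b)
  -- a row of `C` averages `v`, so a maximum of `v` propagates to all neighbours
  have step : ∀ b, v b = v a → ∀ c, G.Adj b c → v c = v a := by
    intro b hb c hbc
    have hsum : ∑ l, C b l * (v a - v l) = 0 := by
      have hb' : ∑ l, C b l * v l = v b := congrFun hv b
      simp only [mul_sub, Finset.sum_sub_distrib, ← Finset.sum_mul, hrow, one_mul, hb', hb,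
        sub_self]
    have := (Finset.sum_eq_zero_iff_of_nonneg fun l _ =>
      mul_nonneg (hnonneg b l) (sub_nonneg.2 (hle l))).1 hsum c (Finset.mem_univ c)
    rcases mul_eq_zero.1 this with h | h
    · exact absurd h (hadj b c hbc).ne'
    · linarith
  have hwalk : ∀ b c, G.Walk b c → v b = v a → v c = v a := by
    intro b c w
    induction w with
    | nil => exact id
    | cons h _ ih => exact fun hb => ih (step _ hb _ h)
  rw [hwalk a j (hG a j).some rfl, hwalk a k (hG a k).some rfl]

lemma SimpleGraph.Connected.apply_eq_of_kronecker_one_mulVec_eq_self {V p : Type*}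
    [Fintype V] [Fintype p] [DecidableEq p] {G : SimpleGraph V} (hG : G.Connected)
    {C : Matrix V V ℝ} (hnonneg : ∀ j k, 0 ≤ C j k) (hrow : ∀ j, ∑ k, C j k = 1)
    (hadj : ∀ j k, G.Adj j k → 0 < C j k)
    {ψ : V × p → ℝ} (hψ : (C ⊗ₖ (1 : Matrix p p ℝ)) *ᵥ ψ = ψ) (j k : V) (q : p) :
    ψ (j, q) = ψ (k, q) :=
  hG.apply_eq_of_mulVec_eq_self hnonneg hrow hadj (v := fun j => ψ (j, q)) (funext fun l =>
    (Matrix.kronecker_one_mulVec_apply C ψ l q).symm.trans (congrFun hψ (l, q))) j k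

section Game

variable {f : ∀ i : Fin N, Fin (n i) → Vec N n → ℝ}

lemma blockGrad_apply {i : Fin N} {x : Vec N n} (hf : ∀ j, DifferentiableAt ℝ (f i j) x)
    (m : Fin (n i)) : blockGrad f i x m = ∑ j, gradient (f i j) x i m := by
  change gradient (fun y => ∑ j, f i j y) x i m = _
  rw [gradient_fun_sum _ fun j _ => hf j]
  simp

lemma inner_gradient_coalObj_single (i : Fin N) (x : Vec N n)
    (d : EuclideanSpace ℝ (Fin (n i))) :
    ⟪gradient (coalObj f i) x, PiLp.single 2 i d⟫ = ⟪blockGrad f i x, d⟫ :=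
  PiLp.inner_single_right (gradient (coalObj f i) x) i d

lemma convexOn_coalObj {i : Fin N} (hconv : ∀ j, ConvexOn ℝ Set.univ (f i j)) :
    ConvexOn ℝ Set.univ (coalObj f i) :=
  ConvexOn.fun_sum convex_univ _ fun j _ => hconv j

lemma differentiableAt_coalObj {i : Fin N} {x : Vec N n}
    (hf : ∀ j, DifferentiableAt ℝ (f i j) x) : DifferentiableAt ℝ (coalObj f i) x :=
  DifferentiableAt.fun_sum fun j _ => hf j

/-- The KKT condition of the game: `P(x)` is normal to `Ω`. -/
def IsKKT (f : ∀ i : Fin N, Fin (n i) → Vec N n → ℝ) (x : Vec N n) : Prop :=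
  ∀ i (d : EuclideanSpace ℝ (Fin (n i))), ∑ j, d j = 0 → ⟪blockGrad f i x, d⟫ = 0

variable {R : Fin N → ℝ}

lemma IsNE.isKKT (hf : ∀ i j, Differentiable ℝ (f i j)) {x : Vec N n}
    (hx : IsNE f R x) : IsKKT f x := by
  intro i d hd
  rw [← inner_gradient_coalObj_single]
  refine inner_gradient_eq_zero_of_forall_le
    (differentiableAt_coalObj fun j => (hf i j).differentiableAt) fun t => ?_
  have h := hx.2 i (x i + t • d)
    (by simp [Finset.sum_add_distrib, ← Finset.mul_sum, hd, hx.1 i])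
  have hsingle : (PiLp.single 2 i (t • d) : Vec N n) = t • PiLp.single 2 i d := by
    ext k : 1
    rcases eq_or_ne k i with rfl | hk
    · simp
    · simp [hk]
  rwa [PiLp.toLp_update_eq_add_single, add_sub_cancel_left, hsingle] at h

lemma IsKKT.isNE (hconv : ∀ i j, ConvexOn ℝ Set.univ (f i j))
    (hf : ∀ i j, Differentiable ℝ (f i j)) {x : Vec N n} (hfeas : ∀ i, ∑ j, x i j = R i)
    (hx : IsKKT f x) : IsNE f R x := by
  refine ⟨hfeas, fun i y hy => ?_⟩
  have h := (convexOn_coalObj (hconv i)).add_inner_gradient_le (x := x)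
    (differentiableAt_coalObj fun j => (hf i j).differentiableAt)
    (WithLp.toLp 2 (Function.update x.ofLp i y))
  rw [PiLp.toLp_update_eq_add_single, add_sub_cancel_left, inner_gradient_coalObj_single,
    hx i _ (by simp [Finset.sum_sub_distrib, hy, hfeas i]), add_zero] at h
  rwa [PiLp.toLp_update_eq_add_single]

lemma IsKKT.eq {μ : ℝ} (hμ : 0 < μ)
    (hmono : ∀ a b : Vec N n, μ * ‖a - b‖ ^ 2 ≤ ⟪a - b, pseudoGrad f a - pseudoGrad f b⟫)
    {x y : Vec N n} (hxR : ∀ i, ∑ j, x i j = R i) (hyR : ∀ i, ∑ j, y i j = R i)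
    (hx : IsKKT f x) (hy : IsKKT f y) : x = y := by
  have horth : ⟪x - y, pseudoGrad f x - pseudoGrad f y⟫ = 0 := by
    refine Finset.sum_eq_zero fun i _ => ?_
    have hd : ∑ j, (x - y) i j = 0 := by simp [Finset.sum_sub_distrib, hxR i, hyR i]
    change ⟪(x - y) i, blockGrad f i x - blockGrad f i y⟫ = 0
    rw [inner_sub_right, real_inner_comm, hx i _ hd, real_inner_comm, hy i _ hd, sub_zero]
  have hsq : ‖x - y‖ ^ 2 ≤ 0 := nonpos_of_mul_nonpos_left (by linarith [hmono x y]) hμ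
  rw [← sub_eq_zero, ← norm_eq_zero]
  exact pow_eq_zero_iff two_ne_zero |>.1 (le_antisymm hsq (by positivity))

lemma toVec_onesKronFull (x : Vec N n) (a : Agent N n) : toVec (onesKronFull x) a = x := rfl

lemma eq_blockGrad_of_tracking {i : Fin N} {x : Vec N n} {ψ : Fin (n i) × Fin (n i) → ℝ}
    (hf : ∀ j, DifferentiableAt ℝ (f i j) x) (hcons : ∀ j k m, ψ (j, m) = ψ (k, m))
    (htrack : ∀ m, (1 / (n i : ℝ)) * ∑ j, ψ (j, m)
      = (1 / (n i : ℝ)) * ∑ j, gradient (f i j) x i m)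
    (jm : Fin (n i) × Fin (n i)) : ψ jm = (1 / (n i : ℝ)) * blockGrad f i x jm.2 := by
  obtain ⟨j, m⟩ := jm
  have hn : (n i : ℝ) ≠ 0 := Nat.cast_ne_zero.2 (Fin.pos j).ne'
  rw [blockGrad_apply hf, ← htrack, Finset.sum_congr rfl fun k _ => hcons k j m]
  simp [hn]

lemma mulVec_eq_zero_of_Lbreve_mulVec_eq_zero
    {L : ∀ i : Fin N, Matrix (Fin (n i)) (Fin (n i)) ℝ} {i : Fin N}
    {ψ : Fin (n i) × Fin (n i) → ℝ} {v : Fin (n i) → ℝ}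
    (hψ : ∀ jm, ψ jm = (1 / (n i : ℝ)) * v jm.2) (h : Lbreve L i *ᵥ ψ = 0) : L i *ᵥ v = 0 := by
  funext j
  have hn : (n i : ℝ) ≠ 0 := Nat.cast_ne_zero.2 (Fin.pos j).ne'
  have hrow : (Lbreve L i *ᵥ ψ) j = (n i : ℝ)⁻¹ * (L i *ᵥ v) j := by
    simp [Lbreve, Matrix.mulVec, dotProduct, Fintype.sum_prod_type, hψ, Finset.mul_sum,
      mul_left_comm]
  rw [h, Pi.zero_apply, eq_comm, mul_eq_zero] at hrow
  exact hrow.resolve_left (inv_ne_zero hn)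

lemma isKKT_of_lapMatrix_mulVec_eq_zero {G : ∀ i, SimpleGraph (Fin (n i))}
    [∀ i, DecidableRel (G i).Adj] (hG : ∀ i, (G i).Connected) {x : Vec N n}
    (h : ∀ i, (G i).lapMatrix ℝ *ᵥ blockGrad f i x = 0) : IsKKT f x := fun i _ hd =>
  inner_eq_zero_of_forall_eq_of_sum_eq_zero
    (fun j k => ((G i).lapMatrix_mulVec_eq_zero_iff_forall_reachable.1 (h i)) j k (hG i j k)) hd

end Game

theorem statement17_general
    (f : ∀ i : Fin N, Fin (n i) → Vec N n → ℝ)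
    (μ : ℝ) (R : Fin N → ℝ)
    (L : ∀ i : Fin N, Matrix (Fin (n i)) (Fin (n i)) ℝ)
    -- Assumption 1
    (hconv : ∀ i j, ConvexOn ℝ Set.univ (f i j))
    (hdiff : ∀ i j, ContDiff ℝ 1 (f i j))
    -- Assumption 2
    (hμ : 0 < μ)
    (hmono : ∀ a b : Vec N n,
      μ * ‖a - b‖ ^ 2 ≤ ⟪a - b, pseudoGrad f a - pseudoGrad f b⟫)
    -- Assumption 3: each `L_i` is the Laplacian of the connected subgraph `G_i`
    (Gi : ∀ i : Fin N, SimpleGraph (Fin (n i)))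
    (instGi : ∀ i, DecidableRel (Gi i).Adj)
    (hGiconn : ∀ i, (Gi i).Connected)
    (hL : ∀ i, L i = (Gi i).lapMatrix ℝ)
    -- `I − M` nonsingular
    (M : Matrix (Agent N n × Agent N n) (Agent N n × Agent N n) ℝ)
    (hM : IsUnit ((1 : Matrix (Agent N n × Agent N n) (Agent N n × Agent N n) ℝ) - M))
    -- `C_i` row-stochastic, positive diagonal, off-diagonal pattern = edges of `G_i`
    (C : ∀ i : Fin N, Matrix (Fin (n i)) (Fin (n i)) ℝ)
    (hCnonneg : ∀ i j m, 0 ≤ C i j m)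
    (hCrow : ∀ i j, ∑ m, C i j m = 1)
    (hCoff : ∀ i (j m : Fin (n i)), j ≠ m → (0 < C i j m ↔ (Gi i).Adj j m))
    -- steady states
    (x : Vec N n) (ξ : Est N n) (ψ : ∀ i : Fin N, Fin (n i) × Fin (n i) → ℝ)
    (hfeas : ∀ i, ∑ j, x i j = R i)
    (hL0 : ∀ i, (Lbreve L i).mulVec (ψ i) = 0)
    (hCfix : ∀ i, (C i ⊗ₖ (1 : Matrix (Fin (n i)) (Fin (n i)) ℝ)).mulVec (ψ i) = ψ i)
    (hMfix : ((1 : Matrix (Agent N n × Agent N n) (Agent N n × Agent N n) ℝ) - M).mulVec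
        (ξ - onesKronFull x) = 0)
    (htrack : ∀ i (m : Fin (n i)),
      (1 / (n i : ℝ)) * ∑ j, ψ i (j, m)
        = (1 / (n i : ℝ)) * ∑ j, gradient (f i j) (toVec ξ ⟨i, j⟩) i m) :
    ξ = onesKronFull x ∧
    (∀ i jm, ψ i jm = (1 / (n i : ℝ)) * blockGrad f i x jm.2) ∧
    (∀ i, (L i).mulVec (blockGrad f i x) = 0) ∧
    IsNE f R x ∧
    (∀ y : Vec N n, IsNE f R y → y = x) := by
  have hf : ∀ i j, Differentiable ℝ (f i j) := fun i j =>
    (hdiff i j).differentiable one_ne_zero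
  have hξ : ξ = onesKronFull x := by
    have := mulVec_injective_iff_isUnit.2 hM (hMfix.trans (mulVec_zero _).symm)
    exact sub_eq_zero.1 (WithLp.ofLp_injective 2 this)
  have hψ : ∀ i jm, ψ i jm = (1 / (n i : ℝ)) * blockGrad f i x jm.2 := fun i =>
    eq_blockGrad_of_tracking (fun j => (hf i j).differentiableAt)
      ((hGiconn i).apply_eq_of_kronecker_one_mulVec_eq_self (hCnonneg i) (hCrow i)
        (fun j k hjk => (hCoff i j k hjk.ne).2 hjk) (hCfix i))
      (by simpa only [hξ, toVec_onesKronFull] using htrack i)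
  have hLx : ∀ i, L i *ᵥ blockGrad f i x = 0 := fun i =>
    mulVec_eq_zero_of_Lbreve_mulVec_eq_zero (hψ i) (hL0 i)
  have hx : IsKKT f x := isKKT_of_lapMatrix_mulVec_eq_zero hGiconn fun i => hL i ▸ hLx i
  exact ⟨hξ, hψ, hLx, hx.isNE hconv hf hfeas,
    fun y hy => (IsNE.isKKT hf hy).eq hμ hmono hy.1 hfeas hx⟩

/-- steady-state analysis, Sec. IV-B of the paper: any steady state of
the gradient-tracking DRA algorithm satisfies `ξ(∞) = 1 ⊗ x(∞)`,
`ψ_i(∞) = 1 ⊗ ((1/n_i)(∂f_i/∂x_i)(x(∞)))`, `L_i (∂f_i/∂x_i)(x(∞)) = 0`, and `x(∞)` is the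
unique Nash equilibrium of the game. -/
theorem statement17
    (f : ∀ i : Fin N, Fin (n i) → Vec N n → ℝ)
    (l : ∀ i : Fin N, Fin (n i) → ℝ) (μ : ℝ) (R : Fin N → ℝ)
    (L : ∀ i : Fin N, Matrix (Fin (n i)) (Fin (n i)) ℝ)
    -- Assumption 1
    (hconv : ∀ i j, ConvexOn ℝ Set.univ (f i j))
    (hdiff : ∀ i j, ContDiff ℝ 1 (f i j))
    (hlip : ∀ i j (a b : Vec N n),
      ‖gradient (f i j) a - gradient (f i j) b‖ ≤ l i j * ‖a - b‖)
    -- Assumption 2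
    (hμ : 0 < μ)
    (hmono : ∀ a b : Vec N n,
      μ * ‖a - b‖ ^ 2 ≤ ⟪a - b, pseudoGrad f a - pseudoGrad f b⟫)
    -- Assumption 3: each `L_i` is the Laplacian of the connected subgraph `G_i`
    (Gi : ∀ i : Fin N, SimpleGraph (Fin (n i)))
    (instGi : ∀ i, DecidableRel (Gi i).Adj)
    (hGiconn : ∀ i, (Gi i).Connected)
    (hL : ∀ i, L i = (Gi i).lapMatrix ℝ)
    -- `I − M` nonsingular
    (M : Matrix (Agent N n × Agent N n) (Agent N n × Agent N n) ℝ)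
    (hM : IsUnit ((1 : Matrix (Agent N n × Agent N n) (Agent N n × Agent N n) ℝ) - M))
    -- `C_i` row-stochastic, positive diagonal, off-diagonal pattern = edges of `G_i`
    (C : ∀ i : Fin N, Matrix (Fin (n i)) (Fin (n i)) ℝ)
    (hCnonneg : ∀ i j m, 0 ≤ C i j m)
    (hCrow : ∀ i j, ∑ m, C i j m = 1)
    (hCdiag : ∀ i j, 0 < C i j j)
    (hCoff : ∀ i (j m : Fin (n i)), j ≠ m → (0 < C i j m ↔ (Gi i).Adj j m))
    -- steady states
    (x : Vec N n) (ξ : Est N n) (ψ : ∀ i : Fin N, Fin (n i) × Fin (n i) → ℝ)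
    (hfeas : ∀ i, ∑ j, x i j = R i)
    (hL0 : ∀ i, (Lbreve L i).mulVec (ψ i) = 0)
    (hCfix : ∀ i, (C i ⊗ₖ (1 : Matrix (Fin (n i)) (Fin (n i)) ℝ)).mulVec (ψ i) = ψ i)
    (hMfix : ((1 : Matrix (Agent N n × Agent N n) (Agent N n × Agent N n) ℝ) - M).mulVec
        (ξ - onesKronFull x) = 0)
    (htrack : ∀ i (m : Fin (n i)),
      (1 / (n i : ℝ)) * ∑ j, ψ i (j, m)
        = (1 / (n i : ℝ)) * ∑ j, gradient (f i j) (toVec ξ ⟨i, j⟩) i m) :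
    ξ = onesKronFull x ∧
    (∀ i jm, ψ i jm = (1 / (n i : ℝ)) * blockGrad f i x jm.2) ∧
    (∀ i, (L i).mulVec (blockGrad f i x) = 0) ∧
    IsNE f R x ∧
    (∀ y : Vec N n, IsNE f R y → y = x) :=
  statement17_general f μ R L hconv hdiff hμ hmono Gi instGi hGiconn hL M hM C hCnonneg hCrow hCoff
    x ξ ψ hfeas hL0 hCfix hMfix htrack
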